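/- arXiv:1802.04930 — 6 statements merged into one kernel-verified Lean document; each statement's English description precedes it below -/
import Mathlib

section
/- There exists a partition of the vertex set of K_8 into 4 parts of size 2 and a coloring of edges such that all edges between distinct parts are blue, and K_8 contains no blue copy of the book B_5. -/
open Finset

/-- A monochromatic copy of the book `B_m` in color `k`: a spine edge `uv`
and `m` page vertices, with all `2m+1` edges colored `k`. -/
def HasMonoBook {n : ℕ} {C : Type*} (c : Fin n → Fin n → C) (m : ℕ) (k : C) : Prop :=
  ∃ u v : Fin n, u ≠ v ∧ ∃ S : Finset (Fin n), S.card = m ∧ u ∉ S ∧ v ∉ S ∧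
    c u v = k ∧ ∀ w ∈ S, c u w = k ∧ c v w = k

/-- Here `true` plays the role of blue.  There is a partition of the `8`
vertices of `K_8` into `4` parts of size `2` and an edge-coloring in which
exactly the edges between distinct parts are blue, containing no blue
copy of the book `B_5`. -/
theorem stmt4 : ∃ (p : Fin 8 → Fin 4) (c : Fin 8 → Fin 8 → Bool),
    (∀ i : Fin 4, (Finset.univ.filter fun v => p v = i).card = 2) ∧
    (∀ i j, c i j = c j i) ∧
    (∀ u v : Fin 8, u ≠ v → (c u v = true ↔ p u ≠ p v)) ∧
    ¬ HasMonoBook c 5 true := by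
  refine ⟨fun v => ⟨v.val / 2, by omega⟩,
    fun u v => decide ((u.val / 2 : ℕ) ≠ v.val / 2), ?_, ?_, ?_, ?_⟩
  · decide
  · decide
  · decide
  · rintro ⟨u, v, huv, S, hS, hu, hv, hcuv, hall⟩
    have hsub : S ⊆ Finset.univ.filter
        (fun w : Fin 8 => (w.val / 2 : ℕ) ≠ u.val / 2 ∧ (w.val / 2 : ℕ) ≠ v.val / 2) := by
      intro w hw
      have h2 := hall w hw
      simp only [decide_eq_true_eq] at h2
      simp only [Finset.mem_filter, Finset.mem_univ, true_and]
      exact ⟨fun h => h2.1 h.symm, fun h => h2.2 h.symm⟩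
    have hle := Finset.card_le_card hsub
    have hne : (u.val / 2 : ℕ) ≠ v.val / 2 := by
      simpa using hcuv
    have hcard : (Finset.univ.filter
        (fun w : Fin 8 => (w.val / 2 : ℕ) ≠ u.val / 2 ∧ (w.val / 2 : ℕ) ≠ v.val / 2)).card ≤ 4 := by
      revert hne
      fin_cases u <;> fin_cases v <;> decide
    omega
end

section
/- For every k ≥ 2 and m ≥ 1, there exists an edge-coloring of the complete graph K_n with k colors, where n = (R(B_m,B_m)−1)·5^{(k−2)/2} if k is even and n = 2·(R(B_m,B_m)−1)·5^{(k−3)/2} if k is odd, such that the coloring contains no rainbow triangle and no monochromatic copy of the book B_m. -/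
open Finset

/-- A rainbow triangle: three mutually distinct vertices whose three
connecting edges receive three pairwise distinct colors. -/
def HasRainbowTriangle {n : ℕ} {C : Type*} (c : Fin n → Fin n → C) : Prop :=
  ∃ a b d : Fin n, a ≠ b ∧ a ≠ d ∧ b ≠ d ∧
    c a b ≠ c a d ∧ c a b ≠ c b d ∧ c a d ≠ c b d

/-- The diagonal two-color Ramsey number `R(B_m, B_m)` of the book `B_m`:
the least `N` such that every symmetric 2-coloring of the edges of `K_N`
contains a monochromatic copy of `B_m`. -/
noncomputable def bookRamsey (m : ℕ) : ℕ :=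
  sInf {N | ∀ c : Fin N → Fin N → Bool, (∀ i j, c i j = c j i) →
    ∃ k : Bool, HasMonoBook c m k}

/-- A "good" coloring: symmetric, no rainbow triangle, no mono book. -/
def GoodCol (m K a : ℕ) : Prop :=
  ∃ c : Fin a → Fin a → Fin K, (∀ i j, c i j = c j i) ∧
    ¬ HasRainbowTriangle c ∧ ∀ col : Fin K, ¬ HasMonoBook c m col

lemma ifinj {α : Type*} {A B : α} (hAB : A ≠ B) {p q : Bool}
    (h : (if p then A else B) = (if q then A else B)) : p = q := by
  cases p <;> cases q <;> simp_all

/-- The substitution step. -/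
lemma stepGen (m : ℕ) (hm : 1 ≤ m) (a K b K' : ℕ)
    (c : Fin a → Fin a → Fin K) (f : Fin b → Fin b → Fin K') (emb : Fin K → Fin K')
    (hc1 : ∀ i j, c i j = c j i) (hc2 : ¬ HasRainbowTriangle c)
    (hc3 : ∀ col, ¬ HasMonoBook c m col)
    (hf1 : ∀ x y, f x y = f y x)
    (hf2 : ∀ x y col, x ≠ y → f x y ≠ emb col)
    (hf3 : ∀ x y z : Fin b, x ≠ y → x ≠ z → y ≠ z → ¬ (f x y = f x z ∧ f x y = f y z))
    (hf4 : ∀ x y z : Fin b, x ≠ y → x ≠ z → y ≠ z → f x y = f x z ∨ f x y = f y z ∨ f x z = f y z)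
    (hemb : Function.Injective emb) : GoodCol m K' (b * a) := by
  classical
  set e : Fin (b * a) → Fin b × Fin a := ⇑(finProdFinEquiv (m := b) (n := a)).symm with he
  set B : Fin (b * a) → Fin b := fun i => (e i).1 with hB
  set P : Fin (b * a) → Fin a := fun i => (e i).2 with hP
  have hinj : ∀ i j : Fin (b * a), B i = B j → P i = P j → i = j := by
    intro i j h1 h2
    have : e i = e j := Prod.ext h1 h2
    exact (finProdFinEquiv (m := b) (n := a)).symm.injective this
  refine ⟨fun i j => if B i = B j then emb (c (P i) (P j)) else f (B i) (B j), ?_, ?_, ?_⟩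
  · intro i j
    dsimp only
    by_cases h : B i = B j
    · rw [if_pos h, if_pos h.symm, hc1]
    · rw [if_neg h, if_neg (fun hh => h hh.symm), hf1]
  · rintro ⟨x, y, z, hxy, hxz, hyz, h1, h2, h3⟩
    dsimp only at h1 h2 h3
    by_cases bxy : B x = B y <;> by_cases bxz : B x = B z
    · -- all blocks equal
      have byz : B y = B z := bxy.symm.trans bxz
      rw [if_pos bxy, if_pos bxz] at h1
      rw [if_pos bxy, if_pos byz] at h2
      rw [if_pos bxz, if_pos byz] at h3
      exact hc2 ⟨P x, P y, P z,
        fun h => hxy (hinj _ _ bxy h), fun h => hxz (hinj _ _ bxz h),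
        fun h => hyz (hinj _ _ byz h),
        fun h => h1 (congrArg emb h), fun h => h2 (congrArg emb h),
        fun h => h3 (congrArg emb h)⟩
    · -- B x = B y, B x ≠ B z
      have byz : B y ≠ B z := fun h => bxz (bxy.trans h)
      rw [if_neg bxz, if_neg byz] at h3
      exact h3 (by rw [bxy])
    · -- B x ≠ B y, B x = B z
      have byz : B y ≠ B z := fun h => bxy (bxz.trans h.symm)
      rw [if_neg bxy] at h2
      rw [if_neg byz] at h2
      exact h2 (by rw [bxz, hf1])
    · by_cases byz : B y = B z
      · rw [if_neg bxy, if_neg bxz] at h1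
        exact h1 (by rw [byz])
      · rw [if_neg bxy, if_neg bxz] at h1
        rw [if_neg bxy, if_neg byz] at h2
        rw [if_neg bxz, if_neg byz] at h3
        rcases hf4 _ _ _ bxy bxz byz with h | h | h
        · exact h1 h
        · exact h2 h
        · exact h3 h
  · rintro col ⟨u, v, huv, S, hS, huS, hvS, hcuv, hpages⟩
    dsimp only at hcuv hpages
    by_cases buv : B u = B v
    · rw [if_pos buv] at hcuv
      have hw : ∀ w ∈ S, B w = B u := by
        intro w hwS
        by_contra hne
        have h := (hpages w hwS).1
        rw [if_neg (fun hh => hne hh.symm)] at h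
        exact hf2 _ _ (c (P u) (P v)) (fun hh => hne hh.symm) (h.trans hcuv.symm)
      have hPinj : Set.InjOn P S := by
        intro w1 h1 w2 h2 h
        exact hinj _ _ ((hw w1 h1).trans (hw w2 h2).symm) h
      refine hc3 (c (P u) (P v)) ⟨P u, P v, fun h => huv (hinj _ _ buv h),
        S.image P, ?_, ?_, ?_, rfl, ?_⟩
      · rw [Finset.card_image_of_injOn hPinj, hS]
      · intro hmem
        obtain ⟨w, hwS, hPw⟩ := Finset.mem_image.mp hmem
        exact huS (hinj _ _ (hw w hwS) hPw ▸ hwS)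
      · intro hmem
        obtain ⟨w, hwS, hPw⟩ := Finset.mem_image.mp hmem
        exact hvS (hinj _ _ ((hw w hwS).trans buv) hPw ▸ hwS)
      · intro w' hmem
        obtain ⟨w, hwS, hPw⟩ := Finset.mem_image.mp hmem
        subst hPw
        have h1 := (hpages w hwS).1
        have h2 := (hpages w hwS).2
        rw [if_pos (hw w hwS).symm] at h1
        rw [if_pos (buv.symm.trans (hw w hwS).symm)] at h2
        exact ⟨hemb (h1.trans hcuv.symm), hemb (h2.trans hcuv.symm)⟩
    · rw [if_neg buv] at hcuv
      obtain ⟨w, hwS⟩ := Finset.card_pos.mp (hS ▸ hm)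
      have hwu : B w ≠ B u := by
        intro h
        have hh := (hpages w hwS).1
        rw [if_pos h.symm] at hh
        exact hf2 _ _ (c (P u) (P w)) buv (hcuv ▸ hh.symm ▸ rfl)
      have hwv : B w ≠ B v := by
        intro h
        have hh := (hpages w hwS).2
        rw [if_pos h.symm] at hh
        exact hf2 _ _ (c (P v) (P w)) buv (hcuv ▸ hh.symm ▸ rfl)
      have h1 := (hpages w hwS).1
      have h2 := (hpages w hwS).2
      rw [if_neg (fun hh => hwu hh.symm)] at h1
      rw [if_neg (fun hh => hwv hh.symm)] at h2
      exact hf3 (B u) (B v) (B w) buv (fun hh => hwu hh.symm) (fun hh => hwv hh.symm)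
        ⟨hcuv.trans h1.symm, hcuv.trans h2.symm⟩

/-- Adding one color, doubling the vertex set (substitute into K₂). -/
lemma stepK2 (m : ℕ) (hm : 1 ≤ m) (K a : ℕ) (h : GoodCol m K a) :
    GoodCol m (K + 1) (2 * a) := by
  obtain ⟨c, hc1, hc2, hc3⟩ := h
  refine stepGen m hm a K 2 (K + 1) c (fun _ _ => Fin.last K) Fin.castSucc
    hc1 hc2 hc3 (fun _ _ => rfl) ?_ ?_ (fun _ _ _ _ _ _ => Or.inl rfl)
    (Fin.castSucc_injective K)
  · intro x y col _
    exact (Fin.castSucc_lt_last col).ne'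
  · intro x y z hxy hxz hyz
    have h1 : x.val ≠ y.val := fun h => hxy (Fin.ext h)
    have h2 : x.val ≠ z.val := fun h => hxz (Fin.ext h)
    have h3 : y.val ≠ z.val := fun h => hyz (Fin.ext h)
    have := x.isLt; have := y.isLt; have := z.isLt
    omega

/-- The pentagon 2-coloring of K₅. -/
def pent (x y : Fin 5) : Bool := decide (x - y = 1 ∨ x - y = 4)

lemma pent_sym : ∀ x y : Fin 5, pent x y = pent y x := by decide

lemma pent_noMono : ∀ x y z : Fin 5, x ≠ y → x ≠ z → y ≠ z →
    ¬ (pent x y = pent x z ∧ pent x y = pent y z) := by decide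

/-- Adding two colors, quintupling the vertex set (substitute into K₅). -/
lemma stepK5 (m : ℕ) (hm : 1 ≤ m) (K a : ℕ) (h : GoodCol m K a) :
    GoodCol m (K + 2) (5 * a) := by
  obtain ⟨c, hc1, hc2, hc3⟩ := h
  have hAB : (⟨K, by omega⟩ : Fin (K + 2)) ≠ ⟨K + 1, by omega⟩ := by
    simp [Fin.ext_iff]
  set f : Fin 5 → Fin 5 → Fin (K + 2) :=
    fun x y => if pent x y then ⟨K, by omega⟩ else ⟨K + 1, by omega⟩ with hf
  have hfp : ∀ x y z w : Fin 5, f x y = f z w → pent x y = pent z w := by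
    intro x y z w h
    exact ifinj hAB h
  refine stepGen m hm a K 5 (K + 2) c f (Fin.castAdd 2) hc1 hc2 hc3 ?_ ?_ ?_ ?_ ?_
  · intro x y; simp only [hf, pent_sym x y]
  · intro x y col _
    have hlt := col.isLt
    simp only [hf]
    split_ifs <;> · intro h; rw [Fin.ext_iff] at h; simp at h; omega
  · intro x y z hxy hxz hyz ⟨h1, h2⟩
    exact pent_noMono x y z hxy hxz hyz ⟨hfp _ _ _ _ h1, hfp _ _ _ _ h2⟩
  · intro x y z _ _ _
    simp only [hf]
    rcases Bool.eq_false_or_eq_true (pent x y) with h | h <;>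
      rcases Bool.eq_false_or_eq_true (pent x z) with h' | h' <;>
        rcases Bool.eq_false_or_eq_true (pent y z) with h'' | h'' <;>
          simp [h, h', h'']
  · intro i j h
    rw [Fin.ext_iff] at h ⊢
    simpa using h

/-- Base case: a good 2-coloring on `R(B_m,B_m) - 1` vertices. -/
lemma baseGood (m : ℕ) : GoodCol m 2 (bookRamsey m - 1) := by
  classical
  have hbool : ∃ c0 : Fin (bookRamsey m - 1) → Fin (bookRamsey m - 1) → Bool,
      (∀ i j, c0 i j = c0 j i) ∧ ∀ k : Bool, ¬ HasMonoBook c0 m k := by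
    set S := {N | ∀ c : Fin N → Fin N → Bool, (∀ i j, c i j = c j i) →
      ∃ k : Bool, HasMonoBook c m k} with hSdef
    have hR : bookRamsey m = sInf S := rfl
    have h0 : 0 ∉ S := by
      intro h
      obtain ⟨k, u, _⟩ := h (fun i _ => i.elim0) (fun i _ => i.elim0)
      exact u.elim0
    by_cases hS : S.Nonempty
    · have hpos : 0 < sInf S :=
        Nat.pos_of_ne_zero fun h => h0 (h ▸ Nat.sInf_mem hS)
      have hnotin : bookRamsey m - 1 ∉ S :=
        Nat.notMem_of_lt_sInf (by omega)
      simp only [hSdef, Set.mem_setOf_eq] at hnotin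
      push_neg at hnotin
      obtain ⟨c0, hsym, hnb⟩ := hnotin
      exact ⟨c0, hsym, hnb⟩
    · have : bookRamsey m - 1 = 0 := by
        rw [hR, Set.not_nonempty_iff_eq_empty.mp hS, Nat.sInf_empty]
      rw [this]
      exact ⟨fun i _ => true, fun i _ => rfl, fun k ⟨u, _⟩ => u.elim0⟩
  obtain ⟨c0, hsym, hnb⟩ := hbool
  refine ⟨fun i j => if c0 i j then 0 else 1, ?_, ?_, ?_⟩
  · intro i j; dsimp only; rw [hsym]
  · rintro ⟨x, y, z, _, _, _, h1, h2, h3⟩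
    have key : ∀ p q r : Fin 2, p = q ∨ p = r ∨ q = r := by decide
    rcases key (if c0 x y then 0 else 1) (if c0 x z then 0 else 1)
      (if c0 y z then 0 else 1) with h | h | h
    · exact h1 h
    · exact h2 h
    · exact h3 h
  · rintro col ⟨u, v, huv, T, hT, huT, hvT, hcuv, hpages⟩
    have h01 : (0 : Fin 2) ≠ 1 := by decide
    refine hnb (c0 u v) ⟨u, v, huv, T, hT, huT, hvT, rfl, ?_⟩
    intro w hw
    have h1 := (hpages w hw).1
    have h2 := (hpages w hw).2
    rw [← hcuv] at h1 h2
    exact ⟨ifinj h01 h1, ifinj h01 h2⟩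

/-- For every `k ≥ 2` and `m ≥ 1` there is a `k`-coloring of `K_n`, where
`n = (R(B_m,B_m)-1)·5^((k-2)/2)` for even `k` and
`n = 2·(R(B_m,B_m)-1)·5^((k-3)/2)` for odd `k`, with no rainbow triangle
and no monochromatic `B_m`. -/
theorem stmt7 (k m : ℕ) (hk : 2 ≤ k) (hm : 1 ≤ m) (n : ℕ)
    (hneven : Even k → n = (bookRamsey m - 1) * 5 ^ ((k - 2) / 2))
    (hnodd : Odd k → n = 2 * (bookRamsey m - 1) * 5 ^ ((k - 3) / 2)) :
    ∃ c : Fin n → Fin n → Fin k, (∀ i j, c i j = c j i) ∧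
      ¬ HasRainbowTriangle c ∧ ∀ col : Fin k, ¬ HasMonoBook c m col := by
  have evenAll : ∀ t, GoodCol m (2 + 2 * t) ((bookRamsey m - 1) * 5 ^ t) := by
    intro t
    induction t with
    | zero => simpa using baseGood m
    | succ t ih =>
      have h := stepK5 m hm (2 + 2 * t) ((bookRamsey m - 1) * 5 ^ t) ih
      have e1 : 2 + 2 * (t + 1) = 2 + 2 * t + 2 := by ring
      have e2 : (bookRamsey m - 1) * 5 ^ (t + 1) = 5 * ((bookRamsey m - 1) * 5 ^ t) := by
        rw [pow_succ]; ring
      rw [e1, e2]; exact h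
  have oddAll : ∀ t, GoodCol m (3 + 2 * t) (2 * ((bookRamsey m - 1) * 5 ^ t)) := by
    intro t
    have h := stepK2 m hm (2 + 2 * t) ((bookRamsey m - 1) * 5 ^ t) (evenAll t)
    have e1 : 3 + 2 * t = 2 + 2 * t + 1 := by ring
    rw [e1]; exact h
  rcases Nat.even_or_odd k with hke | hko
  · obtain ⟨r, hr⟩ := hke
    have hr1 : 1 ≤ r := by omega
    have hn : n = (bookRamsey m - 1) * 5 ^ (r - 1) := by
      rw [hneven ⟨r, hr⟩, show (k - 2) / 2 = r - 1 from by omega]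
    have hkk : k = 2 + 2 * (r - 1) := by omega
    have h := evenAll (r - 1)
    rw [← hkk, ← hn] at h
    exact h
  · obtain ⟨r, hr⟩ := hko
    have hr1 : 1 ≤ r := by omega
    have hn : n = 2 * ((bookRamsey m - 1) * 5 ^ (r - 1)) := by
      rw [hnodd ⟨r, hr⟩, mul_assoc, show (k - 3) / 2 = r - 1 from by omega]
    have hkk : k = 3 + 2 * (r - 1) := by omega
    have h := oddAll (r - 1)
    rw [← hkk, ← hn] at h
    exact h
end

section
/- Every 2-edge-coloring of K_7 with colors red and blue contains either a red triangle (red B_1) or a blue copy of B_2 = K_4 minus an edge (that is, two adjacent vertices u,v and two further vertices each adjacent to both u and v, all five edges blue). -/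
open Finset

/-- Extracting four distinct elements from a finset of card ≥ 4. -/
lemma aux_ex4 {α : Type*} [DecidableEq α] (S : Finset α) (hS : 4 ≤ S.card) :
    ∃ a ∈ S, ∃ b ∈ S, ∃ d ∈ S, ∃ e ∈ S,
      a ≠ b ∧ a ≠ d ∧ a ≠ e ∧ b ≠ d ∧ b ≠ e ∧ d ≠ e := by
  obtain ⟨a, ha⟩ := Finset.card_pos.mp (show 0 < S.card by omega)
  have h1 : 0 < (S.erase a).card := by
    rw [Finset.card_erase_of_mem ha]; omega
  obtain ⟨b, hb⟩ := Finset.card_pos.mp h1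
  have h2 : 0 < ((S.erase a).erase b).card := by
    rw [Finset.card_erase_of_mem hb, Finset.card_erase_of_mem ha]; omega
  obtain ⟨d, hd⟩ := Finset.card_pos.mp h2
  have h3 : 0 < (((S.erase a).erase b).erase d).card := by
    rw [Finset.card_erase_of_mem hd, Finset.card_erase_of_mem hb,
      Finset.card_erase_of_mem ha]; omega
  obtain ⟨e, he⟩ := Finset.card_pos.mp h3
  simp only [Finset.mem_erase] at hb hd he
  exact ⟨a, ha, b, hb.2, d, hd.2.2, e, he.2.2.2,
    Ne.symm hb.1, Ne.symm hd.2.1, Ne.symm he.2.2.1,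
    Ne.symm hd.1, Ne.symm he.2.1, Ne.symm he.1⟩

/-- `red = true`, `blue = false`.  Every 2-coloring of `K_7` contains a red
triangle or a blue copy of `B_2 = K_4` minus an edge. -/
theorem stmt14 (c : Fin 7 → Fin 7 → Bool) (hsym : ∀ i j, c i j = c j i) :
    (∃ a b d : Fin 7, a ≠ b ∧ a ≠ d ∧ b ≠ d ∧
      c a b = true ∧ c a d = true ∧ c b d = true) ∨
    HasMonoBook c 2 false := by
  by_contra hcon
  push_neg at hcon
  obtain ⟨hT, hBk⟩ := hcon
  -- no red triangle, convenient form
  have hR : ∀ a b d : Fin 7, a ≠ b → a ≠ d → b ≠ d →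
      c a b = true → c a d = true → c b d = true → False := by
    intro a b d h1 h2 h3 h4 h5 h6
    exact (hT a b d h1 h2 h3 h4 h5) h6
  -- no blue book with pages w, x, convenient form
  have hB : ∀ u v w x : Fin 7, u ≠ v → u ≠ w → u ≠ x → v ≠ w → v ≠ x → w ≠ x →
      c u v = false → c u w = false → c v w = false → c u x = false →
      c v x = false → False := by
    intro u v w x huv huw hux hvw hvx hwx h1 h2 h3 h4 h5
    refine hBk ⟨u, v, huv, {w, x}, ?_, ?_, ?_, h1, ?_⟩
    · simp [hwx]
    · simp [huw, hux]
    · simp [hvw, hvx]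
    · intro z hz
      rcases Finset.mem_insert.mp hz with h | h
      · subst h; exact ⟨h2, h3⟩
      · simp only [Finset.mem_singleton] at h; subst h; exact ⟨h4, h5⟩
  -- red neighborhoods are blue-complete
  have L1 : ∀ v x y : Fin 7, v ≠ x → v ≠ y → x ≠ y →
      c v x = true → c v y = true → c x y = false := by
    intro v x y h1 h2 h3 h4 h5
    cases h : c x y with
    | false => rfl
    | true => exact (hR v x y h1 h2 h3 h4 h5 h).elim
  set R : Fin 7 → Finset (Fin 7) :=
    fun v => Finset.univ.filter (fun w => w ≠ v ∧ c v w = true) with hRdef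
  have hmemR : ∀ v w : Fin 7, w ∈ R v ↔ w ≠ v ∧ c v w = true := by
    intro v w; simp [hRdef]
  -- red degree at most 3
  have L2 : ∀ v : Fin 7, (R v).card ≤ 3 := by
    intro v
    by_contra hcard
    obtain ⟨a, ha, b, hb, d, hd, e, he, hab, had, hae, hbd, hbe, hde⟩ :=
      aux_ex4 (R v) (by omega)
    rw [hmemR] at ha hb hd he
    exact hB a b d e hab had hae hbd hbe hde
      (L1 v a b (Ne.symm ha.1) (Ne.symm hb.1) hab ha.2 hb.2)
      (L1 v a d (Ne.symm ha.1) (Ne.symm hd.1) had ha.2 hd.2)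
      (L1 v b d (Ne.symm hb.1) (Ne.symm hd.1) hbd hb.2 hd.2)
      (L1 v a e (Ne.symm ha.1) (Ne.symm he.1) hae ha.2 he.2)
      (L1 v b e (Ne.symm hb.1) (Ne.symm he.1) hbe hb.2 he.2)
  by_cases h3 : ∃ v : Fin 7, (R v).card = 3
  · -- Case A: a vertex with red degree 3
    obtain ⟨v, hv⟩ := h3
    obtain ⟨r1, r2, r3, h12, h13, h23, hset⟩ := Finset.card_eq_three.mp hv
    have hr1 : r1 ∈ R v := by rw [hset]; simp
    have hr2 : r2 ∈ R v := by rw [hset]; simp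
    have hr3 : r3 ∈ R v := by rw [hset]; simp
    rw [hmemR] at hr1 hr2 hr3
    have hb12 : c r1 r2 = false :=
      L1 v r1 r2 (Ne.symm hr1.1) (Ne.symm hr2.1) h12 hr1.2 hr2.2
    have hb13 : c r1 r3 = false :=
      L1 v r1 r3 (Ne.symm hr1.1) (Ne.symm hr3.1) h13 hr1.2 hr3.2
    have hb23 : c r2 r3 = false :=
      L1 v r2 r3 (Ne.symm hr2.1) (Ne.symm hr3.1) h23 hr2.2 hr3.2
    -- the other three vertices
    set W : Finset (Fin 7) := Finset.univ \ {v, r1, r2, r3} with hWdef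
    have hWcard : W.card = 3 := by
      rw [hWdef, Finset.card_sdiff_of_subset (Finset.subset_univ _)]
      have : ({v, r1, r2, r3} : Finset (Fin 7)).card = 4 := by
        rw [Finset.card_insert_of_notMem, Finset.card_insert_of_notMem,
          Finset.card_insert_of_notMem, Finset.card_singleton]
        · simp [h23]
        · simp [h12, h13]
        · simp [Ne.symm hr1.1, Ne.symm hr2.1, Ne.symm hr3.1]
      rw [this]; simp
    obtain ⟨w1, w2, w3, hw12, hw13, hw23, hWset⟩ := Finset.card_eq_three.mp hWcard
    have hmemW : ∀ w, w ∈ W → w ≠ v ∧ w ≠ r1 ∧ w ≠ r2 ∧ w ≠ r3 := by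
      intro w hw
      rw [hWdef, Finset.mem_sdiff] at hw
      simp only [Finset.mem_insert, Finset.mem_singleton] at hw
      push_neg at hw
      exact hw.2
    have hw1 : w1 ∈ W := by rw [hWset]; simp
    have hw2 : w2 ∈ W := by rw [hWset]; simp
    have hw3 : w3 ∈ W := by rw [hWset]; simp
    obtain ⟨hw1v, hw1r1, hw1r2, hw1r3⟩ := hmemW w1 hw1
    obtain ⟨hw2v, hw2r1, hw2r2, hw2r3⟩ := hmemW w2 hw2
    obtain ⟨hw3v, hw3r1, hw3r2, hw3r3⟩ := hmemW w3 hw3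
    -- v is blue to each w
    have hvblue : ∀ w, w ∈ W → c v w = false := by
      intro w hw
      obtain ⟨hwv, hwr1, hwr2, hwr3⟩ := hmemW w hw
      have : w ∉ R v := by rw [hset]; simp [hwr1, hwr2, hwr3]
      rw [hmemR] at this
      push_neg at this
      cases h : c v w with
      | false => rfl
      | true => exact absurd h (by simpa [hwv] using this hwv)
    -- each w is blue to at most one r
    have pair : ∀ w ra rb rc, ({ra, rb, rc} : Finset (Fin 7)) = {r1, r2, r3} →
        ra ≠ rb → ra ≠ rc → rb ≠ rc → c ra rb = false → c ra rc = false →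
        c rb rc = false →
        w ≠ ra → w ≠ rb → w ≠ rc → c w ra = false → c w rb = false → False := by
      intro w ra rb rc _ hab hac hbc e1 e2 e3 hwa hwb hwc f1 f2
      exact hB ra rb rc w hab hac (Ne.symm hwa) hbc (Ne.symm hwb) (Ne.symm hwc)
        e1 e2 e3 (by rw [hsym]; exact f1) (by rw [hsym]; exact f2)
    have p12 : ∀ w, w ≠ r1 → w ≠ r2 → w ≠ r3 →
        c w r1 = false → c w r2 = false → False := by
      intro w hwa hwb hwc f1 f2
      exact pair w r1 r2 r3 rfl h12 h13 h23 hb12 hb13 hb23 hwa hwb hwc f1 f2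
    have p13 : ∀ w, w ≠ r1 → w ≠ r2 → w ≠ r3 →
        c w r1 = false → c w r3 = false → False := by
      intro w hwa hwb hwc f1 f2
      refine hB r1 r3 r2 w h13 h12 (Ne.symm hwa) (Ne.symm h23) (Ne.symm hwc)
        (Ne.symm hwb) hb13 hb12 ?_ (by rw [hsym]; exact f1) (by rw [hsym]; exact f2)
      rw [hsym]; exact hb23
    have p23 : ∀ w, w ≠ r1 → w ≠ r2 → w ≠ r3 →
        c w r2 = false → c w r3 = false → False := by
      intro w hwa hwb hwc f1 f2
      refine hB r2 r3 r1 w h23 (Ne.symm h12) (Ne.symm hwb) (Ne.symm h13)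
        (Ne.symm hwc) (Ne.symm hwa) hb23 ?_ ?_ (by rw [hsym]; exact f1)
        (by rw [hsym]; exact f2)
      · rw [hsym]; exact hb12
      · rw [hsym]; exact hb13
    -- any two w's have a common red r
    have common : ∀ w w', w ≠ r1 → w ≠ r2 → w ≠ r3 → w' ≠ r1 → w' ≠ r2 → w' ≠ r3 →
        ∃ r, (w ≠ r) ∧ (w' ≠ r) ∧ c w r = true ∧ c w' r = true := by
      intro w w' a1 a2 a3 b1 b2 b3
      cases e1 : c w r1 with
      | false =>
        have e2 : c w r2 = true := by
          cases e2 : c w r2 with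
          | false => exact (p12 w a1 a2 a3 e1 e2).elim
          | true => rfl
        have e3 : c w r3 = true := by
          cases e3 : c w r3 with
          | false => exact (p13 w a1 a2 a3 e1 e3).elim
          | true => rfl
        cases f2 : c w' r2 with
        | true => exact ⟨r2, a2, b2, e2, f2⟩
        | false =>
          have f3 : c w' r3 = true := by
            cases f3 : c w' r3 with
            | false => exact (p23 w' b1 b2 b3 f2 f3).elim
            | true => rfl
          exact ⟨r3, a3, b3, e3, f3⟩
      | true =>
        cases f1 : c w' r1 with
        | true => exact ⟨r1, a1, b1, e1, f1⟩
        | false =>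
          have f2 : c w' r2 = true := by
            cases f2 : c w' r2 with
            | false => exact (p12 w' b1 b2 b3 f1 f2).elim
            | true => rfl
          have f3 : c w' r3 = true := by
            cases f3 : c w' r3 with
            | false => exact (p13 w' b1 b2 b3 f1 f3).elim
            | true => rfl
          cases e2 : c w r2 with
          | true => exact ⟨r2, a2, b2, e2, f2⟩
          | false =>
            have e3 : c w r3 = true := by
              cases e3 : c w r3 with
              | false => exact (p23 w a1 a2 a3 e2 e3).elim
              | true => rfl
            exact ⟨r3, a3, b3, e3, f3⟩
    -- hence each pair of w's is blue
    have wblue : ∀ w w', w ≠ w' → w ≠ r1 → w ≠ r2 → w ≠ r3 → w' ≠ r1 → w' ≠ r2 →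
        w' ≠ r3 → c w w' = false := by
      intro w w' hww a1 a2 a3 b1 b2 b3
      obtain ⟨r, hwr, hw'r, h1, h2⟩ := common w w' a1 a2 a3 b1 b2 b3
      cases h : c w w' with
      | false => rfl
      | true => exact (hR w w' r hww hwr hw'r h h1 h2).elim
    exact hB w1 w2 w3 v hw12 hw13 hw1v hw23 hw2v hw3v
      (wblue w1 w2 hw12 hw1r1 hw1r2 hw1r3 hw2r1 hw2r2 hw2r3)
      (wblue w1 w3 hw13 hw1r1 hw1r2 hw1r3 hw3r1 hw3r2 hw3r3)
      (wblue w2 w3 hw23 hw2r1 hw2r2 hw2r3 hw3r1 hw3r2 hw3r3)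
      (by rw [hsym]; exact hvblue w1 hw1)
      (by rw [hsym]; exact hvblue w2 hw2)
  · -- Case B: every vertex has red degree ≤ 2
    push_neg at h3
    have hle2 : ∀ v : Fin 7, (R v).card ≤ 2 := by
      intro v
      have := L2 v
      have := h3 v
      omega
    set B0 : Finset (Fin 7) :=
      Finset.univ.filter (fun w => w ≠ 0 ∧ c 0 w = false) with hB0def
    have hmemB0 : ∀ w : Fin 7, w ∈ B0 ↔ w ≠ 0 ∧ c 0 w = false := by
      intro w; simp [hB0def]
    have hB0eq : B0 = (Finset.univ.erase 0) \ R 0 := by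
      ext w
      rw [hmemB0, Finset.mem_sdiff, Finset.mem_erase, hmemR]
      constructor
      · rintro ⟨h1, h2⟩
        exact ⟨⟨h1, Finset.mem_univ w⟩, fun h => by rw [h2] at h; exact absurd h.2 (by simp)⟩
      · rintro ⟨⟨h1, _⟩, h2⟩
        refine ⟨h1, ?_⟩
        cases h : c 0 w with
        | false => rfl
        | true => exact absurd ⟨h1, h⟩ h2
    have hRsub : R 0 ⊆ Finset.univ.erase 0 := by
      intro w hw
      rw [hmemR] at hw
      exact Finset.mem_erase.mpr ⟨hw.1, Finset.mem_univ w⟩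
    have hB0card6 : B0.card = 6 - (R 0).card := by
      rw [hB0eq, Finset.card_sdiff_of_subset hRsub]
      congr 1
    have hB0ge : 4 ≤ B0.card := by
      have := hle2 0
      omega
    -- for x in B0: at most one blue inside B0
    have hUx : ∀ x ∈ B0, ((B0.erase x).filter (fun y => c x y = false)).card ≤ 1 := by
      intro x hx
      rw [Finset.card_le_one]
      intro y hy z hz
      by_contra hyz
      simp only [Finset.mem_filter, Finset.mem_erase] at hy hz
      rw [hmemB0] at hx
      obtain ⟨⟨hyx, hy0⟩, hxy⟩ := hy
      obtain ⟨⟨hzx, hz0⟩, hxz⟩ := hz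
      rw [hmemB0] at hy0 hz0
      exact hB 0 x y z (Ne.symm hx.1) (Ne.symm hy0.1) (Ne.symm hz0.1)
        (Ne.symm hyx) (Ne.symm hzx) hyz hx.2 hy0.2 hxy hz0.2 hxz
    have hTx : ∀ x ∈ B0, 2 ≤ ((B0.erase x).filter (fun y => c x y = true)).card := by
      intro x hx
      have hsplit : B0.erase x ⊆
          ((B0.erase x).filter (fun y => c x y = false)) ∪
          ((B0.erase x).filter (fun y => c x y = true)) := by
        intro y hy
        rw [Finset.mem_union, Finset.mem_filter, Finset.mem_filter]
        cases h : c x y with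
        | false => exact Or.inl ⟨hy, rfl⟩
        | true => exact Or.inr ⟨hy, rfl⟩
      have h1 := Finset.card_le_card hsplit
      have h2 := Finset.card_union_le
        ((B0.erase x).filter (fun y => c x y = false))
        ((B0.erase x).filter (fun y => c x y = true))
      have h3 := hUx x hx
      have h4 : (B0.erase x).card = B0.card - 1 := Finset.card_erase_of_mem hx
      omega
    have hTsubR : ∀ x, ((B0.erase x).filter (fun y => c x y = true)) ⊆ R x := by
      intro x y hy
      simp only [Finset.mem_filter, Finset.mem_erase] at hy
      rw [hmemR]
      exact ⟨hy.1.1, hy.2⟩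
    -- B0 has exactly 4 elements
    have hB0card : B0.card = 4 := by
      obtain ⟨x, hx⟩ := Finset.card_pos.mp (show 0 < B0.card by omega)
      have h1 := hTx x hx
      have h2 := Finset.card_le_card (hTsubR x)
      have h3 := hle2 x
      -- card (erase) = B0.card - 1 ≤ card false-part + card true-part... 
      have h4 : (B0.erase x).card = B0.card - 1 := Finset.card_erase_of_mem hx
      have h5 := hUx x hx
      have hsplit : B0.erase x ⊆
          ((B0.erase x).filter (fun y => c x y = false)) ∪
          ((B0.erase x).filter (fun y => c x y = true)) := by
        intro y hy
        rw [Finset.mem_union, Finset.mem_filter, Finset.mem_filter]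
        cases h : c x y with
        | false => exact Or.inl ⟨hy, rfl⟩
        | true => exact Or.inr ⟨hy, rfl⟩
      have h6 := Finset.card_le_card hsplit
      have h7 := Finset.card_union_le
        ((B0.erase x).filter (fun y => c x y = false))
        ((B0.erase x).filter (fun y => c x y = true))
      omega
    -- for x in B0, red neighbors of x are inside B0
    have hRxB0 : ∀ x ∈ B0, ∀ y, y ≠ x → c x y = true → y ∈ B0 := by
      intro x hx y hyx hxy
      have hTeq : ((B0.erase x).filter (fun y => c x y = true)) = R x := by
        apply Finset.eq_of_subset_of_card_le (hTsubR x)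
        have := hTx x hx
        have := hle2 x
        omega
      have : y ∈ R x := by rw [hmemR]; exact ⟨hyx, hxy⟩
      rw [← hTeq] at this
      simp only [Finset.mem_filter, Finset.mem_erase] at this
      exact this.1.2
    -- R 0 has two elements a, b
    have hR0card : (R 0).card = 2 := by omega
    obtain ⟨a, b, hab, hRset⟩ := Finset.card_eq_two.mp hR0card
    have ha : a ∈ R 0 := by rw [hRset]; simp
    have hb : b ∈ R 0 := by rw [hRset]; simp
    rw [hmemR] at ha hb
    have haB0 : a ∉ B0 := by
      rw [hmemB0]
      rintro ⟨_, h⟩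
      rw [ha.2] at h
      simp at h
    have hbB0 : b ∉ B0 := by
      rw [hmemB0]
      rintro ⟨_, h⟩
      rw [hb.2] at h
      simp at h
    have hcab : c a b = false := by
      cases h : c a b with
      | false => rfl
      | true => exact (hR 0 a b (Ne.symm ha.1) (Ne.symm hb.1) hab ha.2 hb.2 h).elim
    -- two elements of B0
    obtain ⟨x, hx, y, hy, hxy⟩ := Finset.one_lt_card.mp (show 1 < B0.card by omega)
    have key : ∀ z ∈ B0, ∀ w, w ∉ B0 → w ≠ z → c z w = false := by
      intro z hz w hw hwz
      cases h : c z w with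
      | false => rfl
      | true => exact absurd (hRxB0 z hz w hwz h) hw
    have hxa : c x a = false := key x hx a haB0 (fun h => haB0 (h ▸ hx))
    have hxb : c x b = false := key x hx b hbB0 (fun h => hbB0 (h ▸ hx))
    have hya : c y a = false := key y hy a haB0 (fun h => haB0 (h ▸ hy))
    have hyb : c y b = false := key y hy b hbB0 (fun h => hbB0 (h ▸ hy))
    exact hB a b x y hab (fun h => haB0 (h ▸ hx)) (fun h => haB0 (h ▸ hy))
      (fun h => hbB0 (h ▸ hx)) (fun h => hbB0 (h ▸ hy)) hxy
      hcab (by rw [hsym]; exact hxa) (by rw [hsym]; exact hxb)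
      (by rw [hsym]; exact hya) (by rw [hsym]; exact hyb)
end

section
/- Suppose the vertex set of a 2-colored (red/blue) complete graph is partitioned into parts H_1, ..., H_t with all edges between distinct parts monochromatic per pair (red or blue), |H_1| = |H_2| = 4, all edges between H_1 and H_2 blue, and suppose there exist six further parts H_3,...,H_8 such that for each 3 ≤ i ≤ 8 the edges from H_i to H_1 and the edges from H_i to H_2 have different colors (one red, one blue). Then the graph contains a monochromatic copy of the book B_5. -/
open Finset

lemma pigeon5 : ∀ g : Fin 5 → Bool, ∃ i j l : Fin 5, i < j ∧ j < l ∧ g i = g j ∧ g i = g l := by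
  decide

lemma ramsey6 (f : Fin 6 → Fin 6 → Bool) (hs : ∀ i j, f i j = f j i) :
    ∃ a b c : Fin 6, a ≠ b ∧ a ≠ c ∧ b ≠ c ∧ f a b = f a c ∧ f a b = f b c := by
  obtain ⟨i, j, l, hij, hjl, e1, e2⟩ := pigeon5 (fun x => f 0 x.succ)
  
  have hij' : i.succ ≠ j.succ := by simpa [Fin.succ_inj] using hij.ne
  have hjl' : j.succ ≠ l.succ := by simpa [Fin.succ_inj] using hjl.ne
  have hil' : i.succ ≠ l.succ := by simpa [Fin.succ_inj] using (hij.trans hjl).ne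
  by_cases h1 : f i.succ j.succ = f 0 i.succ
  · exact ⟨0, i.succ, j.succ, (Fin.succ_ne_zero i).symm, (Fin.succ_ne_zero j).symm, hij',
      by rw [e1], by rw [h1]⟩
  · by_cases h2 : f i.succ l.succ = f 0 i.succ
    · exact ⟨0, i.succ, l.succ, (Fin.succ_ne_zero i).symm, (Fin.succ_ne_zero l).symm, hil',
        by rw [e2], by rw [h2]⟩
    · by_cases h3 : f j.succ l.succ = f 0 i.succ
      · exact ⟨0, j.succ, l.succ, (Fin.succ_ne_zero j).symm, (Fin.succ_ne_zero l).symm, hjl',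
          by rw [← e1, e2], by rw [h3, e1]⟩
      · refine ⟨i.succ, j.succ, l.succ, hij', hil', hjl', ?_, ?_⟩
        · cases hk : f 0 i.succ <;> simp_all
        · cases hk : f 0 i.succ <;> simp_all

lemma buildBook {n : ℕ} (c : Fin n → Fin n → Bool) (u v w : Fin n) (T : Finset (Fin n))
    (hT : T.card = 4) (huv : u ≠ v) (hwu : w ≠ u) (hwv : w ≠ v)
    (hwT : w ∉ T) (huT : u ∉ T) (hvT : v ∉ T) (k : Bool)
    (e1 : c u v = k) (e2 : c u w = k) (e3 : c v w = k)
    (e4 : ∀ t ∈ T, c u t = k) (e5 : ∀ t ∈ T, c v t = k) : HasMonoBook c 5 k := by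
  refine ⟨u, v, huv, insert w T, ?_, ?_, ?_, e1, ?_⟩
  · rw [card_insert_of_notMem hwT, hT]
  · simp only [mem_insert, not_or]; exact ⟨Ne.symm hwu, huT⟩
  · simp only [mem_insert, not_or]; exact ⟨Ne.symm hwv, hvT⟩
  · intro t ht
    rcases mem_insert.mp ht with rfl | ht
    · exact ⟨e2, e3⟩
    · exact ⟨e4 t ht, e5 t ht⟩

/-- `red = true`, `blue = false`.  Eight pairwise disjoint nonempty parts
with one color between each pair of parts, `|H 0| = |H 1| = 4`, all edges
between `H 0` and `H 1` blue, and six further parts `H 2, …, H 7` each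
joined to `H 0` and to `H 1` by different colors: then there is a
monochromatic book `B_5`. -/
theorem stmt16 (n : ℕ) (c : Fin n → Fin n → Bool) (hsym : ∀ i j, c i j = c j i)
    (H : Fin 8 → Finset (Fin n))
    (hdisj : ∀ i j, i ≠ j → Disjoint (H i) (H j))
    (hne : ∀ i, (H i).Nonempty)
    (hmono : ∀ i j, i ≠ j → ∃ k : Bool, ∀ u ∈ H i, ∀ v ∈ H j, c u v = k)
    (h0 : (H 0).card = 4) (h1 : (H 1).card = 4)
    (hblue : ∀ u ∈ H 0, ∀ v ∈ H 1, c u v = false)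
    (hdiff : ∀ i : Fin 8, 2 ≤ (i : ℕ) → ∃ k : Bool,
      (∀ u ∈ H i, ∀ v ∈ H 0, c u v = k) ∧
      (∀ u ∈ H i, ∀ v ∈ H 1, c u v = !k)) :
    ∃ k : Bool, HasMonoBook c 5 k := by
  classical
  set rep : Fin 8 → Fin n := fun i => (hne i).choose with hrep
  have hmem : ∀ i, rep i ∈ H i := fun i => (hne i).choose_spec
  -- key step: given three parts pairwise joined in color k, with the first two
  -- having the same label toward H0/H1, produce a book
  have key : ∀ P Q R : Fin 8, 2 ≤ (P : ℕ) → 2 ≤ (Q : ℕ) → 2 ≤ (R : ℕ) →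
      P ≠ Q → P ≠ R → Q ≠ R → ∀ k : Bool,
      c (rep P) (rep Q) = k → c (rep P) (rep R) = k → c (rep Q) (rep R) = k →
      ∀ κ : Bool,
      (∀ u ∈ H P, ∀ v ∈ H 0, c u v = κ) → (∀ u ∈ H P, ∀ v ∈ H 1, c u v = !κ) →
      (∀ u ∈ H Q, ∀ v ∈ H 0, c u v = κ) → (∀ u ∈ H Q, ∀ v ∈ H 1, c u v = !κ) →
      ∃ k' : Bool, HasMonoBook c 5 k' := by
    intro P Q R hP hQ hR hPQ hPR hQR k ePQ ePR eQR κ hP0 hP1 hQ0 hQ1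
    have hP0' : P ≠ 0 := Fin.ne_of_val_ne (by omega)
    have hQ0' : Q ≠ 0 := Fin.ne_of_val_ne (by omega)
    have hR0' : R ≠ 0 := Fin.ne_of_val_ne (by omega)
    have hP1' : P ≠ 1 := Fin.ne_of_val_ne (by omega)
    have hQ1' : Q ≠ 1 := Fin.ne_of_val_ne (by omega)
    have hR1' : R ≠ 1 := Fin.ne_of_val_ne (by omega)
    have huv : rep P ≠ rep Q := fun h =>
      (disjoint_left.mp (hdisj P Q hPQ) (hmem P)) (h ▸ hmem Q)
    have hwu : rep R ≠ rep P := fun h =>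
      (disjoint_left.mp (hdisj R P hPR.symm) (hmem R)) (h ▸ hmem P)
    have hwv : rep R ≠ rep Q := fun h =>
      (disjoint_left.mp (hdisj R Q hQR.symm) (hmem R)) (h ▸ hmem Q)
    by_cases hκ : κ = k
    · subst hκ
      refine ⟨κ, buildBook c (rep P) (rep Q) (rep R) (H 0) h0 huv hwu hwv
        (disjoint_left.mp (hdisj R 0 hR0') (hmem R))
        (disjoint_left.mp (hdisj P 0 hP0') (hmem P))
        (disjoint_left.mp (hdisj Q 0 hQ0') (hmem Q))
        κ ePQ ePR eQR ?_ ?_⟩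
      · exact fun t ht => hP0 _ (hmem P) t ht
      · exact fun t ht => hQ0 _ (hmem Q) t ht
    · have hκ' : (!κ) = k := by revert hκ; cases κ <;> cases k <;> decide
      refine ⟨!κ, buildBook c (rep P) (rep Q) (rep R) (H 1) h1 huv hwu hwv
        (disjoint_left.mp (hdisj R 1 hR1') (hmem R))
        (disjoint_left.mp (hdisj P 1 hP1') (hmem P))
        (disjoint_left.mp (hdisj Q 1 hQ1') (hmem Q))
        (!κ) (hκ' ▸ ePQ) (hκ' ▸ ePR) (hκ' ▸ eQR) ?_ ?_⟩
      · exact fun t ht => hP1 _ (hmem P) t ht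
      · exact fun t ht => hQ1 _ (hmem Q) t ht
  -- the 2-colored K6 on parts 2..7
  set emb : Fin 6 → Fin 8 := fun i => ⟨(i : ℕ) + 2, by omega⟩ with hemb
  obtain ⟨a, b, c', hab, hac, hbc, eab, ebc⟩ :=
    ramsey6 (fun i j => c (rep (emb i)) (rep (emb j))) (fun i j => hsym _ _)
  set A := emb a; set B := emb b; set C := emb c'
  have hA2 : 2 ≤ (A : ℕ) := by simp [A, hemb]
  have hB2 : 2 ≤ (B : ℕ) := by simp [B, hemb]
  have hC2 : 2 ≤ (C : ℕ) := by simp [C, hemb]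
  have hembinj : ∀ i j : Fin 6, i ≠ j → emb i ≠ emb j := by
    intro i j hij h
    exact hij (Fin.ext (by simpa [hemb, Fin.ext_iff] using h))
  have hAB : A ≠ B := hembinj _ _ hab
  have hAC : A ≠ C := hembinj _ _ hac
  have hBC : B ≠ C := hembinj _ _ hbc
  set k := c (rep A) (rep B) with hk
  have eAB : c (rep A) (rep B) = k := rfl
  have eAC : c (rep A) (rep C) = k := eab.symm
  have eBC : c (rep B) (rep C) = k := ebc.symm
  obtain ⟨κA, hA0, hA1⟩ := hdiff A hA2
  obtain ⟨κB, hB0, hB1⟩ := hdiff B hB2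
  obtain ⟨κC, hC0, hC1⟩ := hdiff C hC2
  by_cases h1' : κA = κB
  · subst h1'
    exact key A B C hA2 hB2 hC2 hAB hAC hBC k eAB eAC eBC κA hA0 hA1 hB0 hB1
  · by_cases h2' : κA = κC
    · subst h2'
      exact key A C B hA2 hC2 hB2 hAC hAB hBC.symm k eAC eAB
        ((hsym _ _).trans eBC) κA hA0 hA1 hC0 hC1
    · have h3' : κB = κC := by revert h1' h2'; cases κA <;> cases κB <;> cases κC <;> decide
      subst h3'
      exact key B C A hB2 hC2 hA2 hBC hAB.symm hAC.symm k eBC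
        ((hsym _ _).trans eAB) ((hsym _ _).trans eAC) κB hB0 hB1 hC0 hC1
end

section
/- Suppose the vertex set of a 2-colored (red/blue) complete graph is partitioned into parts with monochromatic edges between each pair of parts, and suppose parts H_1, H_2 with |H_1|, |H_2| ≥ 3 have all blue edges between them. If W is the set of vertices outside H_1 ∪ H_2 having all blue edges to H_1 ∪ H_2, then |W| ≤ 4; moreover, if there are at least two parts each with all red edges to H_1 ∪ H_2, then all edges between any two such parts are blue (assuming no monochromatic B_5 exists). -/
open Finset

/-- `red = true`, `blue = false`.  Parts `H1, H2` of size at least `3` have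
all blue edges between them and there is no monochromatic `B_5`.  Then (1)
at most `4` vertices outside `H1 ∪ H2` have all blue edges to `H1 ∪ H2`;
(2) any two disjoint nonempty sets of outside vertices, each with all red
edges to `H1 ∪ H2`, have only blue edges between them. -/
theorem stmt17 (n : ℕ) (c : Fin n → Fin n → Bool) (hsym : ∀ i j, c i j = c j i)
    (H1 H2 : Finset (Fin n)) (hd : Disjoint H1 H2)
    (h1 : 3 ≤ H1.card) (h2 : 3 ≤ H2.card)
    (hblue : ∀ u ∈ H1, ∀ v ∈ H2, c u v = false)
    (hnoB5 : ¬ ∃ k : Bool, HasMonoBook c 5 k) :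
    (Finset.univ.filter fun w => w ∉ H1 ∪ H2 ∧
        ∀ x ∈ H1 ∪ H2, c w x = false).card ≤ 4 ∧
    ∀ A B : Finset (Fin n), A.Nonempty → B.Nonempty → Disjoint A B →
      Disjoint A (H1 ∪ H2) → Disjoint B (H1 ∪ H2) →
      (∀ u ∈ A, ∀ x ∈ H1 ∪ H2, c u x = true) →
      (∀ u ∈ B, ∀ x ∈ H1 ∪ H2, c u x = true) →
      ∀ u ∈ A, ∀ v ∈ B, c u v = false := by
  constructor
  · by_contra hcard
    push_neg at hcard
    obtain ⟨S, hSsub, hScard⟩ := Finset.exists_subset_card_eq (show 5 ≤ (Finset.univ.filter fun w => w ∉ H1 ∪ H2 ∧ ∀ x ∈ H1 ∪ H2, c w x = false).card by omega)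
    obtain ⟨u, hu⟩ := Finset.card_pos.mp (by omega : 0 < H1.card)
    obtain ⟨v, hv⟩ := Finset.card_pos.mp (by omega : 0 < H2.card)
    have huv : u ≠ v := fun h => (Finset.disjoint_left.mp hd hu) (h ▸ hv)
    apply hnoB5
    refine ⟨false, u, v, huv, S, hScard, ?_, ?_, hblue u hu v hv, ?_⟩
    · intro huS
      exact ((Finset.mem_filter.mp (hSsub huS)).2.1) (Finset.mem_union_left _ hu)
    · intro hvS
      exact ((Finset.mem_filter.mp (hSsub hvS)).2.1) (Finset.mem_union_right _ hv)
    · intro w hw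
      have hw' := (Finset.mem_filter.mp (hSsub hw)).2.2
      exact ⟨(hsym u w).trans (hw' u (Finset.mem_union_left _ hu)),
        (hsym v w).trans (hw' v (Finset.mem_union_right _ hv))⟩
  · intro A B _ _ hAB hAH hBH hA hB u hu v hv
    by_contra hc
    have hc' : c u v = true := by
      cases h : c u v with
      | false => exact absurd h hc
      | true => rfl
    have hcardU : 5 ≤ (H1 ∪ H2).card := by
      rw [Finset.card_union_of_disjoint hd]; omega
    obtain ⟨S, hSsub, hScard⟩ := Finset.exists_subset_card_eq hcardU
    have huv : u ≠ v := fun h => (Finset.disjoint_left.mp hAB hu) (h ▸ hv)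
    apply hnoB5
    refine ⟨true, u, v, huv, S, hScard, ?_, ?_, hc', ?_⟩
    · exact fun huS => Finset.disjoint_left.mp hAH hu (hSsub huS)
    · exact fun hvS => Finset.disjoint_left.mp hBH hv (hSsub hvS)
    · exact fun w hw => ⟨hA u hu w (hSsub hw), hB v hv w (hSsub hw)⟩
end

section
/- Let each part of a partition of the vertex set of a 2-colored complete graph have size at most 2, with monochromatic (red or blue) edges between each pair of parts, no monochromatic book B_3, and total number of vertices n ≥ 25. Then a contradiction follows; that is, n ≤ 24. -/
open Finset

/-- In a 2-colored complete graph on 14 vertices, some vertex is the center of at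
least 72 ordered monochromatic "angles" (pairs of equally-colored incident edges).
This is the convexity bound `r(r-1) + b(b-1) ≥ 72` for `r + b = 13`. -/
lemma per_center_bound {V : Type*} [Fintype V] [DecidableEq V] (d : V → V → Bool)
    (hcard : Fintype.card V = 14) (u : V) :
    72 ≤ ∑ v : V, ∑ w : V, (if u ≠ v ∧ u ≠ w ∧ v ≠ w ∧ d u v = d u w then (1:ℕ) else 0) := by
  classical
  set R : Finset V := univ.filter (fun x => u ≠ x ∧ d u x = true) with hR
  set B : Finset V := univ.filter (fun x => u ≠ x ∧ d u x = false) with hB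
  have hdisj : Disjoint R B := by
    rw [Finset.disjoint_left]
    intro x hx hx'
    rw [hR, mem_filter] at hx
    rw [hB, mem_filter] at hx'
    simp [hx.2.2] at hx'
  have hunion : R ∪ B = univ.filter (fun x => u ≠ x) := by
    ext x
    simp only [hR, hB, mem_union, mem_filter, mem_univ, true_and]
    cases h : d u x <;> tauto
  have hcard13 : R.card + B.card = 13 := by
    rw [← card_union_of_disjoint hdisj, hunion, filter_ne, card_erase_of_mem (mem_univ u),
      card_univ, hcard]
  have key : ∀ (k : Bool) (v : V), u ≠ v → d u v = k →
      (∑ w : V, if u ≠ v ∧ u ≠ w ∧ v ≠ w ∧ d u v = d u w then (1:ℕ) else 0)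
        = ((univ.filter (fun x => u ≠ x ∧ d u x = k)).erase v).card := by
    intro k v huv hdc
    rw [← Finset.card_filter]
    congr 1
    ext w
    simp only [mem_filter, mem_univ, true_and, mem_erase]
    constructor
    · rintro ⟨h1, h2, h3, h4⟩
      exact ⟨Ne.symm h3, h2, by rw [← h4, hdc]⟩
    · rintro ⟨h1, h2, h3⟩
      exact ⟨huv, h2, Ne.symm h1, by rw [hdc, h3]⟩
  have hvR : ∀ v ∈ R, (∑ w : V, if u ≠ v ∧ u ≠ w ∧ v ≠ w ∧ d u v = d u w then (1:ℕ) else 0)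
      = R.card - 1 := by
    intro v hv
    have hv' := hv
    rw [hR, mem_filter] at hv'
    rw [key true v hv'.2.1 hv'.2.2, ← hR, card_erase_of_mem hv]
  have hvB : ∀ v ∈ B, (∑ w : V, if u ≠ v ∧ u ≠ w ∧ v ≠ w ∧ d u v = d u w then (1:ℕ) else 0)
      = B.card - 1 := by
    intro v hv
    have hv' := hv
    rw [hB, mem_filter] at hv'
    rw [key false v hv'.2.1 hv'.2.2, ← hB, card_erase_of_mem hv]
  calc (72:ℕ) ≤ R.card * (R.card - 1) + B.card * (B.card - 1) := by
        have h1 : R.card ≤ 13 := by omega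
        have h2 : B.card ≤ 13 := by omega
        interval_cases h : R.card <;> interval_cases h2 : B.card <;> omega
    _ = ∑ v ∈ R, (R.card - 1) + ∑ v ∈ B, (B.card - 1) := by
        rw [sum_const, sum_const, smul_eq_mul, smul_eq_mul]
    _ = ∑ v ∈ R ∪ B, ∑ w : V, (if u ≠ v ∧ u ≠ w ∧ v ≠ w ∧ d u v = d u w then (1:ℕ) else 0) := by
        rw [sum_union hdisj, sum_congr rfl hvR, sum_congr rfl hvB]
    _ ≤ _ := sum_le_sum_of_subset (subset_univ _)

/-- Rotating the three indices of a triple sum. -/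
lemma sum_rot3 {V : Type*} [Fintype V] (f : V → V → V → ℕ) :
    ∑ u : V, ∑ v : V, ∑ w : V, f u v w = ∑ w : V, ∑ u : V, ∑ v : V, f u v w := by
  have h1 : ∀ u : V, ∑ v : V, ∑ w : V, f u v w = ∑ w : V, ∑ v : V, f u v w :=
    fun u => Finset.sum_comm
  simp_rw [h1]
  exact Finset.sum_comm

/-- Three edges in two colors: the number of equally-colored pairs is `1 + 2·[mono]`. -/
lemma bool_angle_id : ∀ a b e : Bool,
    ((if a = b then (1:ℕ) else 0) + (if a = e then 1 else 0) + (if b = e then 1 else 0))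
      = 1 + 2 * (if a = b ∧ b = e then 1 else 0) := by decide

/-- Goodman-type counting proof that `R(B₃, B₃) ≤ 14`: a 2-coloring of `K₁₄` in
which every edge has at most 2 common neighbors in its own color is impossible. -/
lemma ramseyB3 {V : Type*} [Fintype V] [DecidableEq V] (hcard : Fintype.card V = 14)
    (d : V → V → Bool) (hsym : ∀ i j, d i j = d j i)
    (hno : ∀ u v : V, u ≠ v →
      (univ.filter (fun w => u ≠ w ∧ v ≠ w ∧ d u w = d u v ∧ d v w = d u v)).card ≤ 2) :
    False := by
  classical
  have hA : 1008 ≤ ∑ u : V, ∑ v : V, ∑ w : V,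
      (if u ≠ v ∧ u ≠ w ∧ v ≠ w ∧ d u v = d u w then (1:ℕ) else 0) := by
    calc (1008:ℕ) = 14 * 72 := by norm_num
      _ = ∑ _u : V, 72 := by rw [sum_const, card_univ, hcard, smul_eq_mul]
      _ ≤ _ := sum_le_sum (fun u _ => per_center_bound d hcard u)
  have hA2 : (∑ u : V, ∑ v : V, ∑ w : V,
        (if u ≠ v ∧ u ≠ w ∧ v ≠ w ∧ d u v = d v w then (1:ℕ) else 0))
      = ∑ u : V, ∑ v : V, ∑ w : V,
        (if u ≠ v ∧ u ≠ w ∧ v ≠ w ∧ d u v = d u w then (1:ℕ) else 0) := by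
    have e1 : ∀ u v w : V, (u ≠ v ∧ u ≠ w ∧ v ≠ w ∧ d u v = d v w)
        ↔ (v ≠ u ∧ v ≠ w ∧ u ≠ w ∧ d v u = d v w) := by
      intro u v w
      rw [hsym u v]
      constructor
      · rintro ⟨a, b, c, e⟩; exact ⟨Ne.symm a, c, b, e⟩
      · rintro ⟨a, b, c, e⟩; exact ⟨Ne.symm a, c, b, e⟩
    calc _ = ∑ u : V, ∑ v : V, ∑ w : V,
          (if v ≠ u ∧ v ≠ w ∧ u ≠ w ∧ d v u = d v w then (1:ℕ) else 0) :=
        Finset.sum_congr rfl fun u _ => Finset.sum_congr rfl fun v _ =>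
          Finset.sum_congr rfl fun w _ => if_congr (e1 u v w) rfl rfl
      _ = _ := Finset.sum_comm
  have hA3 : (∑ u : V, ∑ v : V, ∑ w : V,
        (if u ≠ v ∧ u ≠ w ∧ v ≠ w ∧ d u w = d v w then (1:ℕ) else 0))
      = ∑ u : V, ∑ v : V, ∑ w : V,
        (if u ≠ v ∧ u ≠ w ∧ v ≠ w ∧ d u v = d u w then (1:ℕ) else 0) := by
    have e3 : ∀ u v w : V, (u ≠ v ∧ u ≠ w ∧ v ≠ w ∧ d u w = d v w)
        ↔ (w ≠ u ∧ w ≠ v ∧ u ≠ v ∧ d w u = d w v) := by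
      intro u v w
      rw [hsym u w, hsym v w]
      constructor
      · rintro ⟨a, b, c, e⟩; exact ⟨Ne.symm b, Ne.symm c, a, e⟩
      · rintro ⟨a, b, c, e⟩; exact ⟨c, Ne.symm a, Ne.symm b, e⟩
    calc _ = ∑ u : V, ∑ v : V, ∑ w : V,
          (if w ≠ u ∧ w ≠ v ∧ u ≠ v ∧ d w u = d w v then (1:ℕ) else 0) :=
        Finset.sum_congr rfl fun u _ => Finset.sum_congr rfl fun v _ =>
          Finset.sum_congr rfl fun w _ => if_congr (e3 u v w) rfl rfl
      _ = _ := sum_rot3 _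
  have hsplit : ∀ u v w : V,
      (if u ≠ v ∧ u ≠ w ∧ v ≠ w then
        ((if d u v = d u w then (1:ℕ) else 0) + (if d u v = d v w then 1 else 0)
          + (if d u w = d v w then 1 else 0)) else 0)
      = (if u ≠ v ∧ u ≠ w ∧ v ≠ w ∧ d u v = d u w then (1:ℕ) else 0)
        + (if u ≠ v ∧ u ≠ w ∧ v ≠ w ∧ d u v = d v w then 1 else 0)
        + (if u ≠ v ∧ u ≠ w ∧ v ≠ w ∧ d u w = d v w then 1 else 0) := by
    intro u v w
    by_cases h : u ≠ v ∧ u ≠ w ∧ v ≠ w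
    · simp [h.1, h.2.1, h.2.2]
    · rw [if_neg h, if_neg (by tauto), if_neg (by tauto), if_neg (by tauto)]
  have hsplit2 : ∀ u v w : V,
      (if u ≠ v ∧ u ≠ w ∧ v ≠ w then
        ((if d u v = d u w then (1:ℕ) else 0) + (if d u v = d v w then 1 else 0)
          + (if d u w = d v w then 1 else 0)) else 0)
      = (if u ≠ v ∧ u ≠ w ∧ v ≠ w then (1:ℕ) else 0)
        + 2 * (if u ≠ v ∧ u ≠ w ∧ v ≠ w ∧ d u v = d u w ∧ d u w = d v w then 1 else 0) := by
    intro u v w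
    by_cases h : u ≠ v ∧ u ≠ w ∧ v ≠ w
    · rw [if_pos h, if_pos h]
      simp only [h.1, h.2.1, h.2.2, true_and, ne_eq, not_false_eq_true]
      exact bool_angle_id (d u v) (d u w) (d v w)
    · rw [if_neg h, if_neg h, if_neg (by tauto)]
  have hT : (∑ u : V, ∑ v : V, ∑ w : V,
      (if u ≠ v ∧ u ≠ w ∧ v ≠ w then (1:ℕ) else 0)) = 2184 := by
    have inner : ∀ u v : V, u ≠ v →
        (∑ w : V, if u ≠ v ∧ u ≠ w ∧ v ≠ w then (1:ℕ) else 0) = 12 := by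
      intro u v huv
      rw [← Finset.card_filter]
      have hfe : univ.filter (fun w : V => u ≠ v ∧ u ≠ w ∧ v ≠ w) = (univ.erase u).erase v := by
        ext w
        simp only [mem_filter, mem_univ, true_and, mem_erase, and_true]
        constructor
        · rintro ⟨_, h2, h3⟩; exact ⟨Ne.symm h3, Ne.symm h2⟩
        · rintro ⟨h1, h2⟩; exact ⟨huv, Ne.symm h2, Ne.symm h1⟩
      rw [hfe, card_erase_of_mem (mem_erase.2 ⟨Ne.symm huv, mem_univ v⟩),
        card_erase_of_mem (mem_univ u), card_univ, hcard]
    have step : ∀ u v : V, (∑ w : V, if u ≠ v ∧ u ≠ w ∧ v ≠ w then (1:ℕ) else 0)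
        = if u ≠ v then 12 else 0 := by
      intro u v
      by_cases h : u ≠ v
      · rw [if_pos h]; exact inner u v h
      · rw [if_neg h]; exact Finset.sum_eq_zero fun w _ => if_neg (fun hc => h hc.1)
    have mid : ∀ u : V, (∑ v : V, ∑ w : V,
        (if u ≠ v ∧ u ≠ w ∧ v ≠ w then (1:ℕ) else 0)) = 156 := by
      intro u
      rw [Finset.sum_congr rfl (fun v _ => step u v), ← Finset.sum_filter, sum_const,
        filter_ne, card_erase_of_mem (mem_univ u), card_univ, hcard, smul_eq_mul]
    rw [Finset.sum_congr rfl (fun u _ => mid u), sum_const, card_univ, hcard, smul_eq_mul]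
  have hM : (∑ u : V, ∑ v : V, ∑ w : V,
      (if u ≠ v ∧ u ≠ w ∧ v ≠ w ∧ d u v = d u w ∧ d u w = d v w then (1:ℕ) else 0)) ≤ 364 := by
    have inner : ∀ u v : V, (∑ w : V,
        (if u ≠ v ∧ u ≠ w ∧ v ≠ w ∧ d u v = d u w ∧ d u w = d v w then (1:ℕ) else 0))
        ≤ if u ≠ v then 2 else 0 := by
      intro u v
      by_cases huv : u ≠ v
      · rw [if_pos huv, ← Finset.card_filter]
        refine le_trans (card_le_card ?_) (hno u v huv)
        intro w hw
        simp only [mem_filter, mem_univ, true_and] at hw ⊢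
        exact ⟨hw.2.1, hw.2.2.1, hw.2.2.2.1.symm, (hw.2.2.2.2.symm).trans hw.2.2.2.1.symm⟩
      · rw [if_neg huv]
        exact le_of_eq (Finset.sum_eq_zero fun w _ => if_neg (fun h => huv h.1))
    have mid : ∀ u : V, (∑ v : V, if u ≠ v then (2:ℕ) else 0) = 26 := by
      intro u
      rw [← Finset.sum_filter, sum_const, filter_ne, card_erase_of_mem (mem_univ u),
        card_univ, hcard, smul_eq_mul]
    calc _ ≤ ∑ u : V, ∑ v : V, (if u ≠ v then (2:ℕ) else 0) :=
          sum_le_sum (fun u _ => sum_le_sum (fun v _ => inner u v))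
      _ = ∑ _u : V, (26:ℕ) := Finset.sum_congr rfl (fun u _ => mid u)
      _ = 364 := by rw [sum_const, card_univ, hcard, smul_eq_mul]
  have hS1 : (∑ u : V, ∑ v : V, ∑ w : V,
      (if u ≠ v ∧ u ≠ w ∧ v ≠ w then
        ((if d u v = d u w then (1:ℕ) else 0) + (if d u v = d v w then 1 else 0)
          + (if d u w = d v w then 1 else 0)) else 0))
      = (∑ u : V, ∑ v : V, ∑ w : V,
          (if u ≠ v ∧ u ≠ w ∧ v ≠ w ∧ d u v = d u w then (1:ℕ) else 0))
        + (∑ u : V, ∑ v : V, ∑ w : V,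
          (if u ≠ v ∧ u ≠ w ∧ v ≠ w ∧ d u v = d v w then (1:ℕ) else 0))
        + (∑ u : V, ∑ v : V, ∑ w : V,
          (if u ≠ v ∧ u ≠ w ∧ v ≠ w ∧ d u w = d v w then (1:ℕ) else 0)) := by
    simp_rw [hsplit, Finset.sum_add_distrib]
  have hS2 : (∑ u : V, ∑ v : V, ∑ w : V,
      (if u ≠ v ∧ u ≠ w ∧ v ≠ w then
        ((if d u v = d u w then (1:ℕ) else 0) + (if d u v = d v w then 1 else 0)
          + (if d u w = d v w then 1 else 0)) else 0))
      = (∑ u : V, ∑ v : V, ∑ w : V, (if u ≠ v ∧ u ≠ w ∧ v ≠ w then (1:ℕ) else 0))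
        + 2 * (∑ u : V, ∑ v : V, ∑ w : V,
          (if u ≠ v ∧ u ≠ w ∧ v ≠ w ∧ d u v = d u w ∧ d u w = d v w then (1:ℕ) else 0)) := by
    simp_rw [hsplit2, Finset.sum_add_distrib, Finset.mul_sum]
  rw [hA2, hA3] at hS1
  rw [hS2, hT] at hS1
  omega

/-- A 2-colored `K_n` with `n ≥ 25` cannot be partitioned into parts of
size at most `2`, with one color between each pair of parts, while avoiding
a monochromatic book `B_3`. -/
theorem stmt18 (n : ℕ) (hn : 25 ≤ n)
    (c : Fin n → Fin n → Bool) (hsym : ∀ i j, c i j = c j i)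
    (P : Finpartition (Finset.univ : Finset (Fin n)))
    (hsize : ∀ A ∈ P.parts, A.card ≤ 2)
    (hmono : ∀ A ∈ P.parts, ∀ B ∈ P.parts, A ≠ B →
      ∃ k : Bool, ∀ u ∈ A, ∀ v ∈ B, c u v = k)
    (hnoB3 : ¬ ∃ k : Bool, HasMonoBook c 3 k) :
    False := by
  classical
  have h14 : (14:ℕ) ≤ n := by omega
  set e : Fin 14 → Fin n := Fin.castLE h14 with he
  have einj : Function.Injective e := Fin.castLE_injective h14
  set d : Fin 14 → Fin 14 → Bool := fun i j => c (e i) (e j) with hd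
  refine ramseyB3 (by simp) d (fun i j => hsym _ _) ?_
  intro u v huv
  by_contra hcardgt
  push_neg at hcardgt
  obtain ⟨W, hWsub, hW3⟩ :=
    Finset.exists_subset_card_eq
      (s := univ.filter (fun w => u ≠ w ∧ v ≠ w ∧ d u w = d u v ∧ d v w = d u v))
      (n := 3) (by omega)
  have hWprop : ∀ w ∈ W, u ≠ w ∧ v ≠ w ∧ d u w = d u v ∧ d v w = d u v := by
    intro w hw
    have := hWsub hw
    simpa using this
  refine hnoB3 ⟨d u v, e u, e v, einj.ne huv, W.image e, ?_, ?_, ?_, rfl, ?_⟩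
  · rw [Finset.card_image_of_injective _ einj, hW3]
  · intro hmem
    obtain ⟨w, hw, hwe⟩ := Finset.mem_image.1 hmem
    exact (hWprop w hw).1 (einj hwe).symm
  · intro hmem
    obtain ⟨w, hw, hwe⟩ := Finset.mem_image.1 hmem
    exact (hWprop w hw).2.1 (einj hwe).symm
  · intro x hx
    obtain ⟨w, hw, rfl⟩ := Finset.mem_image.1 hx
    exact ⟨(hWprop w hw).2.2.1, (hWprop w hw).2.2.2⟩
end
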